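/- Let k ≥ 2 be an integer, A > 1, M > 0 real numbers, γ = A^{-1/k}, and let d₁, …, d_k be real numbers with |d₁| ≥ A and |d₁ d_i| ≤ M for all 2 ≤ i ≤ k. Let B be the real symmetric k×k matrix with entries b_{i,l} = γ^{2k-i-l} d_i d_l for i ≠ l, b_{1,1} = γ^{2k-2} d₁², and b_{i,i} = γ^{-2} + γ^{2(k-i)} d_i² for i > 1. Then every eigenvalue of B is greater than or equal to γ^{-2} - M(k-1)γ^{k-1} - M²(k-2)γ^{2k+1}; equivalently, for every x ∈ ℝ^k, xᵀ B x ≥ (γ^{-2} - M(k-1)γ^{k-1} - M²(k-2)γ^{2k+1}) ‖x‖². -/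

import Mathlib

/-!
Gershgorin. Every row of `B` has diagonal entry at least `γ⁻²` (for the first row because
`γ ^ k * |d₁| ≥ 1`), and off-diagonal absolute row sum at most
`M (k - 1) γ^(k-1) + M² (k - 2) γ^(2k+1)`: in the first row and column the entries are
`γ^(≥ k-1) |d₁ dₗ| ≤ M γ^(k-1)`, and elsewhere `|dᵢ| ≤ M γ^k` and the power of `γ` is
at least `1`.
Gershgorin's disc theorem then bounds the eigenvalues; for the quadratic form,
`2 |xᵢ xₗ| ≤ xᵢ² + xₗ²` together with the symmetry of `B` gives the same bound.
-/

open Finset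

theorem neg_abs_mul_add_sq_div_two_le (b u v : ℝ) :
    -(|b| * (u ^ 2 + v ^ 2)) / 2 ≤ u * b * v := by
  nlinarith [neg_abs_le b, le_abs_self b, sq_nonneg (u + v), sq_nonneg (u - v)]

theorem abs_le_of_one_le_mul_abs {t a b M : ℝ} (ht : 0 ≤ t) (ha : 1 ≤ t * |a|)
    (hab : |a * b| ≤ M) : |b| ≤ M * t :=
  calc |b| ≤ t * |a| * |b| := le_mul_of_one_le_left (abs_nonneg b) ha
    _ = t * |a * b| := by rw [abs_mul, mul_assoc]
    _ ≤ M * t := by rw [mul_comm M]; exact mul_le_mul_of_nonneg_left hab ht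

section Gershgorin

variable {ι : Type*} [Fintype ι] [DecidableEq ι] {B : Matrix ι ι ℝ} {c : ℝ}

theorem Matrix.le_of_hasEigenvalue_of_add_sum_abs_le_diag
    (hrow : ∀ i, c + ∑ j ∈ univ.erase i, |B i j| ≤ B i i) {μ : ℝ}
    (hμ : Module.End.HasEigenvalue (Matrix.toLin' B) μ) : c ≤ μ := by
  obtain ⟨i, hi⟩ := eigenvalue_mem_ball hμ
  rw [Metric.mem_closedBall, Real.dist_eq] at hi
  simp only [Real.norm_eq_abs] at hi
  linarith [hrow i, neg_abs_le (μ - B i i)]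

theorem Matrix.IsSymm.mul_sum_sq_le_sum_sum_mul_mul (hB : B.IsSymm)
    (hrow : ∀ i, c + ∑ j ∈ univ.erase i, |B i j| ≤ B i i) (x : ι → ℝ) :
    c * ∑ i, x i ^ 2 ≤ ∑ i, ∑ j, x i * B i j * x j := by
  set R : ι → ℝ := fun i => ∑ j ∈ univ.erase i, |B i j|
  have hswap : ∑ i, ∑ j ∈ univ.erase i, |B i j| * x j ^ 2 = ∑ i, R i * x i ^ 2 := by
    rw [sum_comm' (t' := univ) (s' := fun j => univ.erase j) (by simp [and_comm, ne_comm])]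
    refine sum_congr rfl fun j _ => ?_
    rw [← sum_mul]
    exact congrArg (· * x j ^ 2) (sum_congr rfl fun i _ => by rw [hB.apply])
  have hoff : -∑ i, R i * x i ^ 2 ≤ ∑ i, ∑ j ∈ univ.erase i, x i * B i j * x j :=
    calc -∑ i, R i * x i ^ 2
        = -(∑ i, ∑ j ∈ univ.erase i, |B i j| * x i ^ 2 +
            ∑ i, ∑ j ∈ univ.erase i, |B i j| * x j ^ 2) / 2 := by
          rw [hswap]
          simp only [R, sum_mul]
          ring
      _ = ∑ i, ∑ j ∈ univ.erase i, -(|B i j| * (x i ^ 2 + x j ^ 2)) / 2 := by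
          simp only [mul_add, add_div, sum_add_distrib, neg_div, sum_neg_distrib, sum_div]
      _ ≤ _ := sum_le_sum fun i _ => sum_le_sum fun j _ => neg_abs_mul_add_sq_div_two_le _ _ _
  calc c * ∑ i, x i ^ 2
      ≤ ∑ i, (B i i - R i) * x i ^ 2 := by
        rw [mul_sum]
        exact sum_le_sum fun i _ => by gcongr; linarith [hrow i]
    _ ≤ ∑ i, (B i i * x i ^ 2 + ∑ j ∈ univ.erase i, x i * B i j * x j) := by
        simp only [sub_mul, sum_sub_distrib, sum_add_distrib]
        linarith
    _ = ∑ i, ∑ j, x i * B i j * x j :=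
        sum_congr rfl fun i _ => by rw [← add_sum_erase _ _ (mem_univ i)]; ring

end Gershgorin

/-- The paper's index `i ∈ {1, …, k}` is `i - 1 : Fin k` here. -/
noncomputable def matrixB {k : ℕ} (γ : ℝ) (d : Fin k → ℝ) : Matrix (Fin k) (Fin k) ℝ :=
  Matrix.of fun i l =>
    if i = l then
      (if (i : ℕ) = 0 then γ ^ (2 * k - 2) * d i ^ 2
       else 1 / γ ^ 2 + γ ^ (2 * (k - 1 - (i : ℕ))) * d i ^ 2)
    else γ ^ (2 * k - 2 - (i : ℕ) - (l : ℕ)) * d i * d l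

namespace matrixB

variable {k : ℕ} {γ M : ℝ} {d : Fin k → ℝ} {o : Fin k}

theorem isSymm (γ : ℝ) (d : Fin k → ℝ) : (matrixB γ d).IsSymm := by
  refine Matrix.IsSymm.ext fun i l => ?_
  by_cases h : i = l
  · rw [h]
  · simp only [matrixB, Matrix.of_apply, if_neg h, if_neg (Ne.symm h)]
    rw [show 2 * k - 2 - (l : ℕ) - i = 2 * k - 2 - i - l by omega]
    ring

theorem inv_sq_le_diag (ho : (o : ℕ) = 0) (hγ : 0 < γ) (hd : 1 ≤ γ ^ k * |d o|) (i : Fin k) :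
    1 / γ ^ 2 ≤ matrixB γ d i i := by
  simp only [matrixB, Matrix.of_apply, if_true]
  split_ifs with hi
  · obtain rfl : i = o := Fin.ext (hi.trans ho.symm)
    rw [div_le_iff₀ (by positivity)]
    calc 1 ≤ (γ ^ k * |d i|) ^ 2 := one_le_pow₀ hd
      _ = γ ^ (2 * k - 2) * d i ^ 2 * γ ^ 2 := by
        rw [mul_pow, sq_abs, ← pow_mul, mul_right_comm, ← pow_add]
        congr 3
        omega
  · have : 0 ≤ γ ^ (2 * (k - 1 - (i : ℕ))) * d i ^ 2 := by positivity
    linarith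

theorem abs_zero_apply_le (ho : (o : ℕ) = 0) (hγ : 0 < γ) (hγ1 : γ ≤ 1)
    (hd : ∀ l, l ≠ o → |d o * d l| ≤ M) {l : Fin k} (hl : l ≠ o) :
    |matrixB γ d o l| ≤ M * γ ^ (k - 1) := by
  rw [matrixB, Matrix.of_apply, if_neg (Ne.symm hl), mul_assoc, abs_mul,
    abs_of_pos (pow_pos hγ _)]
  have hexp : γ ^ (2 * k - 2 - o - (l : ℕ)) ≤ γ ^ (k - 1) :=
    pow_le_pow_of_le_one hγ.le hγ1 (by have := l.isLt; omega)
  rw [mul_comm M]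
  exact mul_le_mul hexp (hd l hl) (abs_nonneg _) (by positivity)

theorem abs_apply_le (ho : (o : ℕ) = 0) (hγ : 0 < γ) (hγ1 : γ ≤ 1)
    (hd : ∀ l, l ≠ o → |d l| ≤ M * γ ^ k) {i l : Fin k} (hi : i ≠ o) (hl : l ≠ o)
    (hil : i ≠ l) :
    |matrixB γ d i l| ≤ M ^ 2 * γ ^ (2 * k + 1) := by
  simp only [matrixB, Matrix.of_apply, if_neg hil, abs_mul, abs_of_pos (pow_pos hγ _)]
  have hi0 : (i : ℕ) ≠ 0 := fun h => hi (Fin.ext (h.trans ho.symm))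
  have hl0 : (l : ℕ) ≠ 0 := fun h => hl (Fin.ext (h.trans ho.symm))
  have hexp : γ ^ (2 * k - 2 - (i : ℕ) - l) ≤ γ ^ 1 :=
    pow_le_pow_of_le_one hγ.le hγ1 <| by
      have := i.isLt; have := l.isLt; have := Fin.val_ne_of_ne hil; omega
  calc γ ^ (2 * k - 2 - (i : ℕ) - l) * |d i| * |d l|
      ≤ γ ^ 1 * (M * γ ^ k) * (M * γ ^ k) := by
        have hMγ : 0 ≤ M * γ ^ k := (abs_nonneg _).trans (hd i hi)
        gcongr
        exacts [hd i hi, hd l hl]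
    _ = M ^ 2 * γ ^ (2 * k + 1) := by ring

theorem sum_abs_apply_le (hk : 2 ≤ k) (ho : (o : ℕ) = 0) (hγ : 0 < γ) (hγ1 : γ ≤ 1)
    (hM : 0 ≤ M) (hd0 : 1 ≤ γ ^ k * |d o|) (hd : ∀ l, l ≠ o → |d o * d l| ≤ M) (i : Fin k) :
    ∑ l ∈ univ.erase i, |matrixB γ d i l| ≤
      M * ((k : ℝ) - 1) * γ ^ (k - 1) + M ^ 2 * ((k : ℝ) - 2) * γ ^ (2 * k + 1) := by
  have hk1 : ((k - 1 : ℕ) : ℝ) = k - 1 := by rw [Nat.cast_sub (by omega), Nat.cast_one]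
  have hk2 : ((k - 1 - 1 : ℕ) : ℝ) = k - 2 := by rw [Nat.cast_sub (by omega), hk1]; ring
  have hkR : (2 : ℝ) ≤ k := by exact_mod_cast hk
  have hb : 0 ≤ M ^ 2 * ((k : ℝ) - 2) * γ ^ (2 * k + 1) := by
    have : (0 : ℝ) ≤ k - 2 := by linarith
    positivity
  by_cases hi : i = o
  · subst i
    have hrow :
        ∑ l ∈ univ.erase o, |matrixB γ d o l| ≤ (k - 1 : ℕ) • (M * γ ^ (k - 1)) := by
      refine (sum_le_card_nsmul _ _ _ fun l hl =>
        abs_zero_apply_le ho hγ hγ1 hd (ne_of_mem_erase hl)).trans_eq ?_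
      rw [card_erase_of_mem (mem_univ o), card_univ, Fintype.card_fin]
    rw [nsmul_eq_mul, hk1] at hrow
    linarith
  · have hmem : o ∈ univ.erase i := mem_erase.mpr ⟨Ne.symm hi, mem_univ o⟩
    have hd' : ∀ l, l ≠ o → |d l| ≤ M * γ ^ k := fun l hl =>
      abs_le_of_one_le_mul_abs (by positivity) hd0 (hd l hl)
    have hrest : ∑ l ∈ (univ.erase i).erase o, |matrixB γ d i l| ≤
        (k - 1 - 1 : ℕ) • (M ^ 2 * γ ^ (2 * k + 1)) := by
      refine (sum_le_card_nsmul _ _ _ fun l hl =>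
        abs_apply_le ho hγ hγ1 hd' hi (ne_of_mem_erase hl)
          (Ne.symm (ne_of_mem_erase (mem_of_mem_erase hl)))).trans_eq ?_
      rw [card_erase_of_mem hmem, card_erase_of_mem (mem_univ i), card_univ, Fintype.card_fin]
    have hfirst : |matrixB γ d i o| ≤ M * γ ^ (k - 1) := by
      rw [(isSymm γ d).apply]
      exact abs_zero_apply_le ho hγ hγ1 hd hi
    rw [nsmul_eq_mul, hk2] at hrest
    rw [← add_sum_erase _ _ hmem]
    have : M * γ ^ (k - 1) ≤ M * ((k : ℝ) - 1) * γ ^ (k - 1) := by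
      rw [mul_right_comm]
      exact le_mul_of_one_le_right (by positivity) (by linarith)
    linarith

end matrixB

theorem rpow_neg_one_div_natCast_pow {A : ℝ} (hA : 0 ≤ A) {k : ℕ} (hk : k ≠ 0) :
    (A ^ (-(1 / (k : ℝ)))) ^ k = A⁻¹ := by
  rw [Real.rpow_neg hA, one_div, inv_pow, Real.rpow_inv_natCast_pow hA hk]

/-- Gershgorin-type lower bound for the eigenvalues (equivalently, for the
quadratic form) of the symmetric matrix `B` built from the partial derivatives data `d`.
Indices are 0-based: the paper's index `i ∈ {1,…,k}` corresponds to `i - 1 : Fin k`. -/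
theorem eigenvalue_lower_bound (k : ℕ) (hk : 2 ≤ k) (A M : ℝ) (hA : 1 < A) (hM : 0 < M)
    (γ : ℝ) (hγ : γ = A ^ (-(1 / (k : ℝ))))
    (d : Fin k → ℝ)
    (hd1 : |d ⟨0, by omega⟩| ≥ A)
    (hdi : ∀ i : Fin k, i ≠ ⟨0, by omega⟩ → |d ⟨0, by omega⟩ * d i| ≤ M)
    (B : Matrix (Fin k) (Fin k) ℝ)
    (hB : ∀ i l : Fin k,
      B i l =
        if i = l then
          (if (i : ℕ) = 0 then γ ^ (2 * k - 2) * d i ^ 2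
           else 1 / γ ^ 2 + γ ^ (2 * (k - 1 - (i : ℕ))) * d i ^ 2)
        else γ ^ (2 * k - 2 - (i : ℕ) - (l : ℕ)) * d i * d l) :
    (∀ μ : ℝ, Module.End.HasEigenvalue (Matrix.toLin' B) μ →
        μ ≥ 1 / γ ^ 2 - M * ((k : ℝ) - 1) * γ ^ (k - 1) - M ^ 2 * ((k : ℝ) - 2) * γ ^ (2 * k + 1)) ∧
      (∀ x : Fin k → ℝ,
        ∑ i, ∑ l, x i * B i l * x l ≥
          (1 / γ ^ 2 - M * ((k : ℝ) - 1) * γ ^ (k - 1) - M ^ 2 * ((k : ℝ) - 2) * γ ^ (2 * k + 1)) *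
            ∑ i, x i ^ 2) := by
  obtain rfl : B = matrixB γ d := Matrix.ext hB
  have hA0 : 0 < A := zero_lt_one.trans hA
  have hγ0 : 0 < γ := hγ ▸ Real.rpow_pos_of_pos hA0 _
  have hγ1 : γ ≤ 1 := hγ ▸ Real.rpow_le_one_of_one_le_of_nonpos hA.le (by simp)
  have hd0 : 1 ≤ γ ^ k * |d ⟨0, by omega⟩| := by
    rw [hγ, rpow_neg_one_div_natCast_pow hA0.le (by omega), inv_mul_eq_div, one_le_div hA0]
    exact hd1
  have hrow : ∀ i, 1 / γ ^ 2 - M * ((k : ℝ) - 1) * γ ^ (k - 1) -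
      M ^ 2 * ((k : ℝ) - 2) * γ ^ (2 * k + 1) + ∑ l ∈ univ.erase i, |matrixB γ d i l| ≤
      matrixB γ d i i := fun i => by
    linarith [matrixB.inv_sq_le_diag rfl hγ0 hd0 i,
      matrixB.sum_abs_apply_le hk rfl hγ0 hγ1 hM.le hd0 hdi i]
  exact ⟨fun μ hμ => Matrix.le_of_hasEigenvalue_of_add_sum_abs_le_diag hrow hμ,
    fun x => (matrixB.isSymm γ d).mul_sum_sq_le_sum_sum_mul_mul hrow x⟩
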